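/- arXiv:2001.00385 — 2 statements merged into one kernel-verified Lean document; each statement's English description precedes it below -/
import Mathlib

section
/- Let t ≥ 5 be an integer and let G be a connected graph on n vertices satisfying σ₂(G) > ((t-3)/(t-2))·n, having no Hamiltonian path. Let C be a longest cycle of G and let u, v be two distinct vertices not on C. Then n > 2t-4. -/
open SimpleGraph

section OrePath

variable {V : Type*} [Fintype V] [DecidableEq V] (G : SimpleGraph V) [DecidableRel G.Adj]

/-- Build a walk whose support is a given adjacency-chain list. -/
lemma walk_of_chain : ∀ (l : List V) (x : V), (x :: l).IsChain G.Adj →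
    ∃ p : G.Walk x ((x :: l).getLast (by simp)), p.support = x :: l := by
  intro l
  induction l with
  | nil =>
    intro x _
    exact ⟨Walk.nil, rfl⟩
  | cons b l ih =>
    intro x h
    have hxb : G.Adj x b := (List.isChain_cons_cons.mp h).1
    have hbl : (b :: l).IsChain G.Adj := (List.isChain_cons_cons.mp h).2
    obtain ⟨p, hp⟩ := ih b hbl
    have hLast : (b :: l).getLast (by simp) = (x :: b :: l).getLast (by simp) := by
      simp [List.getLast_cons]
    refine ⟨hLast ▸ (Walk.cons hxb p), ?_⟩
    have key : ∀ (y z : V) (hyz : y = z) (q : G.Walk x y), (hyz ▸ q).support = q.support := by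
      rintro y z rfl q; rfl
    rw [key _ _ hLast (Walk.cons hxb p), Walk.support_cons, hp]

/-- If a walk starts outside a list and ends inside it, there is a boundary edge. -/
lemma walk_boundary (l : List V) : ∀ {a b : V} (p : G.Walk a b), a ∉ l → b ∈ l →
    ∃ z w, z ∈ l ∧ w ∉ l ∧ G.Adj w z := by
  intro a b p
  induction p with
  | nil => intro ha hb; exact absurd hb ha
  | @cons u c b h q ih =>
    intro ha hb
    by_cases hc : c ∈ l
    · exact ⟨c, u, hc, ha, h⟩
    · exact ih hc hb

/-- Rotate a "cycle" list so that a chosen element becomes last. -/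
lemma rotate_chain (l : List V) (hch : l.IsChain G.Adj)
    (hcyc : ∀ x ∈ l.getLast?, ∀ y ∈ l.head?, G.Adj x y)
    (z : V) (hz : z ∈ l) :
    ∃ m : List V, m.Perm l ∧ m.IsChain G.Adj ∧ m.getLast? = some z := by
  obtain ⟨l1, l2, rfl⟩ := List.append_of_mem hz
  refine ⟨l2 ++ (l1 ++ [z]), ?_, ?_, ?_⟩
  · have h := List.perm_append_comm (l₁ := l2) (l₂ := l1 ++ [z])
    simpa [List.append_assoc] using h
  · have h1 : List.IsChain G.Adj l1 ∧ List.IsChain G.Adj (z :: l2) ∧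
        ∀ x ∈ l1.getLast?, ∀ y ∈ (z :: l2).head?, G.Adj x y := List.isChain_append.mp hch
    rw [List.isChain_append]
    refine ⟨(List.isChain_cons.mp h1.2.1).2, ?_, ?_⟩
    · rw [List.isChain_append]
      refine ⟨h1.1, by simp, ?_⟩
      intro x hx y hy
      simp only [List.head?_cons, Option.mem_def, Option.some.injEq] at hy
      subst hy
      exact h1.2.2 x hx z (by simp)
    · intro x hx y hy
      apply hcyc
      · rcases l2 with _ | ⟨c, l2⟩
        · simp at hx
        · rw [List.getLast?_append]
          simpa using hx
      · rcases l1 with _ | ⟨d, l1⟩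
        · simpa using hy
        · simpa using hy
  · simp

variable {G}

/-- Ore-type theorem: connected + degree-sum ≥ n-1 for nonadjacent pairs ⇒ Hamiltonian path. -/
lemma ore_ham_path (hconn : G.Connected) (hn2 : 2 ≤ Fintype.card V)
    (hdeg : ∀ x y : V, x ≠ y → ¬ G.Adj x y →
      Fintype.card V - 1 ≤ G.degree x + G.degree y) :
    ∃ (a b : V) (p : G.Walk a b), p.IsHamiltonian := by
  classical
  haveI : Nonempty V := Fintype.card_pos_iff.mp (by omega)
  obtain ⟨v0⟩ := ‹Nonempty V›
  -- longest path list
  set P : ℕ → Prop := fun k => ∃ l : List V, l.Nodup ∧ l.IsChain G.Adj ∧ l.length = k with hP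
  have hP1 : P 1 := ⟨[v0], by simp, by simp, rfl⟩
  have hPbound : ∀ k, P k → k ≤ Fintype.card V := by
    rintro k ⟨l, hnd, _, rfl⟩; exact hnd.length_le_card
  set K := Nat.findGreatest P (Fintype.card V) with hK
  have hPK : P K := Nat.findGreatest_spec (m := 1) (by omega) hP1
  obtain ⟨l, hnd, hch, hlen⟩ := hPK
  have hmax : ∀ m : List V, m.Nodup → m.IsChain G.Adj → m.length ≤ K := by
    intro m hmnd hmch
    by_contra hlt
    push_neg at hlt
    exact Nat.findGreatest_is_greatest hlt (hPbound _ ⟨m, hmnd, hmch, rfl⟩)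
      ⟨m, hmnd, hmch, rfl⟩
  have hK1 : 1 ≤ K := Nat.le_findGreatest (by omega) hP1
  have hlpos : 0 < l.length := by omega
  have hlne : l ≠ [] := List.length_pos_iff.mp hlpos
  -- Main claim: l contains every vertex.
  have hall : ∀ w : V, w ∈ l := by
    by_contra hnall
    push_neg at hnall
    obtain ⟨w0, hw0⟩ := hnall
    -- any "cycle" rearrangement of l leads to a contradiction via connectivity
    have hcyc_contra : ∀ m : List V, m.Perm l → m.IsChain G.Adj →
        (∀ x ∈ m.getLast?, ∀ y ∈ m.head?, G.Adj x y) → False := by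
      intro m hperm hmch hmcyc
      have hmne : m ≠ [] := by
        intro h; rw [h] at hperm; exact hlne hperm.nil_eq.symm
      have hw0m : w0 ∉ m := fun h => hw0 (hperm.mem_iff.mp h)
      obtain ⟨p⟩ : G.Reachable w0 (m.head hmne) := hconn.preconnected w0 _
      obtain ⟨z, w, hzm, hwm, hadj⟩ := walk_boundary G m p hw0m (List.head_mem hmne)
      obtain ⟨m', hperm', hch', hlast'⟩ := rotate_chain G m hmch hmcyc z hzm
      have hm'nd : m'.Nodup := (hperm'.trans hperm).symm.nodup hnd
      have hwm' : w ∉ m' := fun h => hwm (hperm'.mem_iff.mp h)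
      have hext : (m' ++ [w]).length ≤ K :=
        hmax _ (List.nodup_append'.mpr ⟨hm'nd, by simp, by
          intro b hb hb'; simp at hb'; subst hb'; exact hwm' hb⟩)
          (List.isChain_append.mpr ⟨hch', by simp, by
            intro a ha b hb
            simp only [List.head?_cons, Option.mem_def, Option.some.injEq] at hb
            rw [hlast'] at ha
            simp only [Option.mem_def, Option.some.injEq] at ha
            subst ha; subst hb
            exact hadj.symm⟩)
      have : m'.length = l.length := (hperm'.trans hperm).length_eq
      simp only [List.length_append, List.length_singleton] at hext
      omega
    -- endpoints
    by_cases hlen1 : l.length = 1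
    · obtain ⟨c, rfl⟩ := List.length_eq_one_iff.mp hlen1
      obtain ⟨p⟩ : G.Reachable w0 c := hconn.preconnected w0 c
      obtain ⟨z, w, hzm, hwm, hadj⟩ := walk_boundary G [c] p hw0 (by simp)
      simp only [List.mem_singleton] at hzm
      subst hzm
      have := hmax [w, z] (by simp [hadj.ne]) (by simp [hadj])
      simp at this
      omega
    · have hlen2 : 2 ≤ l.length := by omega
      set x := l.head hlne with hx
      set y := l.getLast hlne with hy
      have hxy : x ≠ y := by
        intro h
        have h0 : l[0] = l[l.length - 1] := by
          rw [← List.head_eq_getElem hlne, ← List.getLast_eq_getElem hlne]; exact h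
        have := hnd.getElem_inj_iff.mp h0
        omega
      have hNx : ∀ w', G.Adj x w' → w' ∈ l := by
        intro w' hw'
        by_contra hw'l
        have := hmax (w' :: l) (List.nodup_cons.mpr ⟨hw'l, hnd⟩)
          (List.isChain_cons.mpr ⟨by
            intro b hb
            rw [List.head?_eq_head hlne] at hb
            simp only [Option.mem_def, Option.some.injEq] at hb
            subst hb
            exact hw'.symm, hch⟩)
        simp only [List.length_cons] at this
        omega
      have hNy : ∀ w', G.Adj y w' → w' ∈ l := by
        intro w' hw'
        by_contra hw'l
        have := hmax (l ++ [w']) (List.nodup_append'.mpr ⟨hnd, by simp, by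
            intro b hb hb'; simp at hb'; subst hb'; exact hw'l hb⟩)
          (List.isChain_append.mpr ⟨hch, by simp, by
            intro a ha b hb
            rw [List.getLast?_eq_getLast hlne] at ha
            simp only [Option.mem_def, Option.some.injEq, List.head?_cons] at ha hb
            subst ha; subst hb
            exact hw'⟩)
        simp only [List.length_append, List.length_singleton] at this
        omega
      by_cases hadjxy : G.Adj x y
      · exact hcyc_contra l (List.Perm.refl l) hch (by
          intro a ha b hb
          rw [List.getLast?_eq_getLast hlne] at ha
          rw [List.head?_eq_head hlne] at hb
          simp only [Option.mem_def, Option.some.injEq] at ha hb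
          subst ha; subst hb
          exact hadjxy.symm)
      · have hdsum := hdeg x y hxy hadjxy
        set k := l.length - 1 with hk
        -- facts about neighbors of x
        have hfx : ∀ w' ∈ G.neighborFinset x, w' ∈ l ∧ 1 ≤ l.idxOf w' ∧
            l.idxOf w' < l.length := by
          intro w' hw'
          rw [mem_neighborFinset] at hw'
          have hm : w' ∈ l := hNx w' hw'
          have hlt : l.idxOf w' < l.length := List.idxOf_lt_length_iff.mpr hm
          refine ⟨hm, ?_, hlt⟩
          by_contra h0
          push_neg at h0
          have h00 : l.idxOf w' = 0 := by omega
          have e1 := List.getElem_idxOf hlt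
          simp only [h00] at e1
          rw [List.getElem_zero hlpos] at e1
          exact hw'.ne e1
        have hfy : ∀ w' ∈ G.neighborFinset y, w' ∈ l ∧ l.idxOf w' < l.length ∧
            l.idxOf w' ≠ k := by
          intro w' hw'
          rw [mem_neighborFinset] at hw'
          have hm : w' ∈ l := hNy w' hw'
          have hlt : l.idxOf w' < l.length := List.idxOf_lt_length_iff.mpr hm
          refine ⟨hm, hlt, ?_⟩
          intro h0
          have e1 := List.getElem_idxOf hlt
          have h00 : l.idxOf w' = l.length - 1 := by omega
          simp only [h00] at e1
          rw [← List.getLast_eq_getElem hlne] at e1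
          exact hw'.ne e1
        set A : Finset ℕ := (G.neighborFinset x).image (fun w' => l.idxOf w' - 1) with hA
        set B : Finset ℕ := (G.neighborFinset y).image (fun w' => l.idxOf w') with hB
        have hcardA : A.card = G.degree x := by
          rw [hA, Finset.card_image_of_injOn, ← card_neighborFinset_eq_degree]
          intro w1 h1 w2 h2 he
          simp only at he
          obtain ⟨m1, i1, lt1⟩ := hfx w1 h1
          obtain ⟨m2, i2, lt2⟩ := hfx w2 h2
          have heq : l.idxOf w1 = l.idxOf w2 := by omega
          have e1 := List.getElem_idxOf lt1
          have e2 := List.getElem_idxOf lt2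
          simp only [heq] at e1
          rw [e2] at e1
          exact e1.symm
        have hcardB : B.card = G.degree y := by
          rw [hB, Finset.card_image_of_injOn, ← card_neighborFinset_eq_degree]
          intro w1 h1 w2 h2 he
          obtain ⟨m1, lt1, _⟩ := hfy w1 h1
          obtain ⟨m2, lt2, _⟩ := hfy w2 h2
          simp only at he
          have e1 := List.getElem_idxOf lt1
          have e2 := List.getElem_idxOf lt2
          simp only [he] at e1
          rw [e2] at e1
          exact e1.symm
        have hAsub : A ⊆ Finset.range k := by
          intro i hi
          rw [hA, Finset.mem_image] at hi
          obtain ⟨w', hw', he⟩ := hi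
          subst he
          obtain ⟨_, i1, lt1⟩ := hfx w' hw'
          rw [Finset.mem_range]
          omega
        have hBsub : B ⊆ Finset.range k := by
          intro i hi
          rw [hB, Finset.mem_image] at hi
          obtain ⟨w', hw', he⟩ := hi
          subst he
          obtain ⟨_, lt1, ne1⟩ := hfy w' hw'
          rw [Finset.mem_range]
          omega
        -- length bound
        have hlenbound : l.length ≤ Fintype.card V - 1 := by
          have h1 : l.toFinset ⊆ Finset.univ.erase w0 := by
            intro b hb
            rw [Finset.mem_erase]
            exact ⟨fun h => hw0 (h ▸ List.mem_toFinset.mp hb), Finset.mem_univ b⟩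
          have h2 := Finset.card_le_card h1
          rw [List.toFinset_card_of_nodup hnd, Finset.card_erase_of_mem (Finset.mem_univ w0),
            Finset.card_univ] at h2
          exact h2
        -- pigeonhole
        have hinter : (A ∩ B).Nonempty := by
          rw [← Finset.card_pos]
          have hu : (A ∪ B) ⊆ Finset.range k := Finset.union_subset hAsub hBsub
          have hu2 := Finset.card_le_card hu
          rw [Finset.card_range] at hu2
          have := Finset.card_union_add_card_inter A B
          omega
        obtain ⟨i, hi⟩ := hinter
        rw [Finset.mem_inter] at hi
        obtain ⟨hiA, hiB⟩ := hi
        rw [hA, Finset.mem_image] at hiA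
        rw [hB, Finset.mem_image] at hiB
        obtain ⟨w1, hw1, he1⟩ := hiA
        obtain ⟨w2, hw2, he2⟩ := hiB
        obtain ⟨_, i1, lt1⟩ := hfx w1 hw1
        obtain ⟨_, lt2, ne2⟩ := hfy w2 hw2
        have hik : i < k := Finset.mem_range.mp (hAsub (by
          rw [hA, Finset.mem_image]; exact ⟨w1, hw1, he1⟩))
        have hidx1 : l.idxOf w1 = i + 1 := by omega
        have hi1lt : i + 1 < l.length := by omega
        have hilt : i < l.length := by omega
        have hadj1 : G.Adj x l[i + 1] := by
          have e1 := List.getElem_idxOf lt1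
          simp only [hidx1] at e1
          rw [e1]
          exact (mem_neighborFinset G x w1).mp hw1
        have hadj2 : G.Adj y l[i] := by
          have e1 := List.getElem_idxOf lt2
          simp only [he2] at e1
          rw [e1]
          exact (mem_neighborFinset G y w2).mp hw2
        -- crossover list
        set m := l.take (i + 1) ++ (l.drop (i + 1)).reverse with hm
        have htne : l.take (i + 1) ≠ [] := by
          intro h
          have := congrArg List.length h
          simp only [List.length_take, List.length_nil] at this
          omega
        have hdne : l.drop (i + 1) ≠ [] := by
          intro h
          have := congrArg List.length h
          simp only [List.length_drop, List.length_nil] at this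
          omega
        have hmperm : m.Perm l := by
          have h1 : m.Perm (l.take (i+1) ++ l.drop (i+1)) :=
            List.Perm.append_left _ (List.reverse_perm _)
          rwa [List.take_append_drop] at h1
        have hsplit : (l.take (i+1) ++ l.drop (i+1)).IsChain G.Adj := by
          rw [List.take_append_drop]; exact hch
        obtain ⟨hcht, hchd, _⟩ := List.isChain_append.mp hsplit
        have hflip : flip G.Adj = G.Adj := by
          funext a b
          exact propext ⟨fun h => h.symm, fun h => h.symm⟩
        have hmch : m.IsChain G.Adj := by
          rw [hm, List.isChain_append]
          refine ⟨hcht, by rw [List.isChain_reverse]; exact List.IsChain.imp (fun _ _ h => h.symm) hchd, ?_⟩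
          intro p hp q hq
          rw [List.getLast?_eq_getLast htne] at hp
          rw [List.head?_reverse, List.getLast?_eq_getLast hdne] at hq
          simp only [Option.mem_def, Option.some.injEq] at hp hq
          have hp' : p = l[i] := by
            rw [← hp, List.getLast_take htne]
            simp only [Nat.add_sub_cancel]
            rw [List.getElem?_eq_getElem hilt]
            rfl
          have hq' : q = y := by
            rw [← hq, List.getLast_drop hdne, hy]
          rw [hp', hq']
          exact hadj2.symm
        have hmcyc : ∀ p ∈ m.getLast?, ∀ q ∈ m.head?, G.Adj p q := by
          intro p hp q hq
          rw [hm, List.getLast?_append, List.getLast?_reverse,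
            List.head?_eq_head hdne] at hp
          rw [hm, List.head?_append, List.head?_eq_head htne] at hq
          rw [show ∀ (a : V) (b : Option V), (some a).or b = some a from fun _ _ => rfl] at hp hq
          simp only [Option.mem_def, Option.some.injEq] at hp hq
          have hp' : p = l[i+1] := by rw [← hp, List.head_drop]
          have hq' : q = x := by rw [← hq, List.head_take, hx]
          rw [hp', hq']
          exact hadj1.symm
        exact hcyc_contra m hmperm hmch hmcyc
  -- conclude: Hamiltonian path
  obtain ⟨p, hp⟩ := walk_of_chain G l.tail (l.head hlne) (by rw [List.cons_head_tail]; exact hch)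
  refine ⟨_, _, p, fun v => ?_⟩
  rw [hp, List.cons_head_tail]
  exact List.count_eq_one_of_mem hnd (hall v)

end OrePath

/-- Let `t ≥ 5`, let `G` be a connected graph on `n` vertices with
`σ₂(G) > ((t-3)/(t-2))·n` and no Hamiltonian path, let `C` be a longest cycle of `G`,
and let `u ≠ v` be vertices not on `C`. Then `n > 2t - 4`. -/
theorem stmt_9 {V : Type*} [Fintype V] [DecidableEq V] (G : SimpleGraph V)
    [DecidableRel G.Adj] (t : ℕ) (ht : 5 ≤ t) (hconn : G.Connected)
    (hσ₂ : ∀ x y : V, x ≠ y → ¬ G.Adj x y →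
      ((t : ℝ) - 3) / ((t : ℝ) - 2) * (Fintype.card V : ℝ)
        < (G.degree x : ℝ) + (G.degree y : ℝ))
    (hnoham : ¬ ∃ (a b : V) (p : G.Walk a b), p.IsHamiltonian)
    (a : V) (C : G.Walk a a) (hC : C.IsCycle)
    (hlongest : ∀ (b : V) (D : G.Walk b b), D.IsCycle → D.length ≤ C.length)
    (u v : V) (huv : u ≠ v) (hu : u ∉ C.support) (hv : v ∉ C.support) :
    2 * t - 4 < Fintype.card V := by
  by_contra hle
  push_neg at hle
  have hn2 : 2 ≤ Fintype.card V :=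
    Fintype.one_lt_card_iff_nontrivial.mpr ⟨u, v, huv⟩
  set n := Fintype.card V with hn
  have ht2 : (0 : ℝ) < (t : ℝ) - 2 := by
    have : (5 : ℝ) ≤ (t : ℝ) := by exact_mod_cast ht
    linarith
  apply hnoham
  apply ore_ham_path hconn hn2
  intro x y hxy hnadj
  have h1 := hσ₂ x y hxy hnadj
  have hnr : (n : ℝ) ≤ 2 * (t : ℝ) - 4 := by
    have h2 : (n : ℝ) ≤ ((2 * t - 4 : ℕ) : ℝ) := by exact_mod_cast hle
    have h3 : ((2 * t - 4 : ℕ) : ℝ) = 2 * (t : ℝ) - 4 := by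
      have h4 : 4 ≤ 2 * t := by omega
      push_cast [Nat.cast_sub h4]
      ring
    linarith [h3 ▸ h2]
  have hkey : (n : ℝ) - 2 ≤ ((t : ℝ) - 3) / ((t : ℝ) - 2) * (n : ℝ) := by
    rw [div_mul_eq_mul_div, le_div_iff₀ ht2]
    nlinarith
  have h5 : (n : ℝ) - 2 < (G.degree x : ℝ) + (G.degree y : ℝ) := lt_of_le_of_lt hkey h1
  have h6 : ((n - 2 : ℕ) : ℝ) < ((G.degree x + G.degree y : ℕ) : ℝ) := by
    rw [Nat.cast_sub hn2]
    push_cast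
    linarith
  have h7 : n - 2 < G.degree x + G.degree y := by exact_mod_cast h6
  omega
end

section
/- Let t ≥ 5 be an integer and let G be a connected graph on n vertices with σ₂(G) ≥ ((t-3)/(t-2))·n. If G has no Hamiltonian path, then n ≥ 2t-4. -/
open SimpleGraph

private lemma getElem_congr' {α : Type*} (l : List α) {i j : ℕ} (h : i = j)
    (hi : i < l.length) : l[i]'hi = l[j]'(h ▸ hi) := by subst h; rfl

private lemma walk_of_chain' {V : Type*} {G : SimpleGraph V} :
    ∀ (l : List V), l.IsChain G.Adj → l ≠ [] → ∃ a b, ∃ p : G.Walk a b, p.support = l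
  | [], _, h => absurd rfl h
  | [x], _, _ => ⟨x, x, Walk.nil, rfl⟩
  | x :: y :: r, hc, _ => by
    obtain ⟨a, b, p, hs⟩ := walk_of_chain' (y :: r) (List.isChain_cons_cons.1 hc).2 (by simp)
    have ha : a = y := by
      have h2 := p.support_eq_cons
      rw [hs] at h2
      exact (List.cons_eq_cons.mp h2).1.symm
    subst ha
    exact ⟨x, b, Walk.cons (List.isChain_cons_cons.1 hc).1 p, by rw [Walk.support_cons, hs]⟩

private lemma exists_boundary' {V : Type*} {G : SimpleGraph V} (s : V → Prop) {x y : V}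
    (p : G.Walk x y) : ¬ s x → s y → ∃ u w, ¬ s u ∧ s w ∧ G.Adj u w := by
  induction p with
  | nil => intro hx hy; exact absurd hy hx
  | @cons u z r h q ih =>
    intro hx hy
    by_cases hz : s z
    · exact ⟨u, z, hx, hz, h⟩
    · exact ih hz hy

private lemma key_ham {V : Type*} [Fintype V] [DecidableEq V] (G : SimpleGraph V)
    [DecidableRel G.Adj] (hconn : G.Connected)
    (hdeg : ∀ x y : V, x ≠ y → ¬ G.Adj x y →
      Fintype.card V ≤ G.degree x + G.degree y + 1) :
    ∃ a b, ∃ p : G.Walk a b, p.IsHamiltonian := by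
  classical
  obtain ⟨v⟩ := hconn.nonempty
  set n := Fintype.card V with hn
  set P : ℕ → Prop := fun m => ∃ l : List V, l.IsChain G.Adj ∧ l.Nodup ∧ l ≠ [] ∧ l.length = m
    with hPdef
  have hbound : ∀ m, P m → m ≤ n := by
    rintro m ⟨l, -, hnd, -, hl⟩; rw [← hl]; exact hnd.length_le_card
  have hP1 : P 1 := ⟨[v], List.isChain_singleton v, List.nodup_singleton v,
    List.cons_ne_nil _ _, rfl⟩
  have hPk : P (Nat.findGreatest P n) := Nat.findGreatest_spec (hbound 1 hP1) hP1
  set k := Nat.findGreatest P n with hkdef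
  have hmax : ∀ m, P m → m ≤ k := fun m hm => Nat.le_findGreatest (hbound m hm) hm
  have hk1 : 1 ≤ k := hmax 1 hP1
  obtain ⟨l, hchain, hnodup, hne, hlen⟩ := hPk
  by_cases hkn : k = n
  · obtain ⟨a, b, p, hs⟩ := walk_of_chain' l hchain hne
    refine ⟨a, b, p, Walk.IsPath.isHamiltonian_of_mem (Walk.IsPath.mk' (by rw [hs]; exact hnodup)) ?_⟩
    intro w
    have huniv : l.toFinset = Finset.univ :=
      Finset.eq_univ_of_card _
        (by rw [List.toFinset_card_of_nodup hnodup, hlen, hkn])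
    rw [hs, ← List.mem_toFinset, huniv]
    exact Finset.mem_univ w
  exfalso
  have hkn' : k < n := lt_of_le_of_ne (hbound k ⟨l, hchain, hnodup, hne, hlen⟩) hkn
  set a := l.head hne with ha
  set b := l.getLast hne with hb
  -- every neighbor of the head is on the path
  have hmemA : ∀ w, G.Adj a w → w ∈ l := by
    intro w hw
    by_contra hwl
    have hP : P (k + 1) := by
      refine ⟨w :: l, ?_, List.nodup_cons.2 ⟨hwl, hnodup⟩, List.cons_ne_nil _ _, by simp [hlen]⟩
      have hl' : l.head hne :: l.tail = l := List.cons_head_tail hne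
      rw [← hl']
      exact List.isChain_cons_cons.2 ⟨hw.symm, by rw [hl']; exact hchain⟩
    have := hmax _ hP; omega
  -- every neighbor of the last vertex is on the path
  have hmemB : ∀ w, G.Adj b w → w ∈ l := by
    intro w hw
    by_contra hwl
    have hP : P (k + 1) := by
      refine ⟨l ++ [w], ?_, ?_, by simp, by simp [hlen]⟩
      · refine hchain.append (List.isChain_singleton w) ?_
        intro x hx y hy
        rw [List.getLast?_eq_getLast hne, Option.mem_def, Option.some.injEq] at hx
        simp only [List.head?_cons, Option.mem_def, Option.some.injEq] at hy
        rw [← hx, ← hy]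
        exact hw
      · rw [List.nodup_append]
        refine ⟨hnodup, List.nodup_singleton w, ?_⟩
        intro x hx z hz hxz
        rw [List.mem_singleton] at hz
        subst hz; subst hxz; exact hwl hx
    have := hmax _ hP; omega
  -- there is a vertex off the path
  have hul : ∃ u, u ∉ l := by
    by_contra h
    push_neg at h
    have hsub : (Finset.univ : Finset V) ⊆ l.toFinset := fun x _ => List.mem_toFinset.2 (h x)
    have := Finset.card_le_card hsub
    rw [Finset.card_univ, List.toFinset_card_of_nodup hnodup, hlen] at this
    omega
  obtain ⟨u, hu⟩ := hul
  obtain ⟨q⟩ := hconn.preconnected u a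
  obtain ⟨u', w, hu', hwmem, hadj⟩ := exists_boundary' (· ∈ l) q hu (List.head_mem hne)
  -- from any "cycle" covering the path we get a longer path, contradiction
  have hext : ∀ c : List V, c.IsChain G.Adj → c.Perm l →
      (∀ hc : c ≠ [], G.Adj (c.getLast hc) (c.head hc)) → False := by
    intro c hcchain hcperm hcyc
    have hcne : c ≠ [] := by
      intro h
      exact hne (List.Perm.eq_nil (h ▸ hcperm).symm)
    have hwc : w ∈ c := hcperm.mem_iff.2 hwmem
    obtain ⟨x, y, hxy⟩ := List.append_of_mem hwc
    subst hxy
    have hperm2 : ((w :: y) ++ x).Perm l := List.perm_append_comm.trans hcperm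
    have hcyc' := hcyc hcne
    have hP : P (k + 1) := by
      refine ⟨u' :: ((w :: y) ++ x), ?_, ?_, by simp, ?_⟩
      · refine List.isChain_cons.2 ⟨?_, ?_⟩
        · intro z hz
          simp only [List.cons_append, List.head?_cons, Option.mem_def, Option.some.injEq] at hz
          rw [← hz]; exact hadj
        · obtain ⟨hx1, hx2, hx3⟩ := List.isChain_append.1 hcchain
          refine List.isChain_append.2 ⟨hx2, hx1, ?_⟩
          intro p hp q hq
          have hxne : x ≠ [] := by rintro rfl; simp at hq
          rw [List.getLast?_eq_getLast (List.cons_ne_nil w y), Option.mem_def,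
            Option.some.injEq] at hp
          rw [List.head?_eq_head hxne, Option.mem_def, Option.some.injEq] at hq
          rw [← hp, ← hq]
          have e1 : (x ++ w :: y).getLast hcne = (w :: y).getLast (List.cons_ne_nil w y) :=
            List.getLast_append_of_ne_nil _ _
          have e2 : (x ++ w :: y).head hcne = x.head hxne := by
            rw [List.head_eq_getElem hcne,
              List.getElem_append_left (List.length_pos_iff.2 hxne),
              ← List.head_eq_getElem hxne]
          rw [e1, e2] at hcyc'
          exact hcyc'
      · refine List.nodup_cons.2 ⟨fun hm => hu' (hperm2.mem_iff.1 hm), ?_⟩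
        exact hperm2.nodup_iff.2 hnodup
      · have := hperm2.length_eq
        simp only [List.length_cons, this, hlen]
    have := hmax _ hP; omega
  rcases Nat.lt_or_ge k 2 with hk2 | hk2
  · -- the path is a single vertex
    have hP : P 2 := by
      refine ⟨[u', w], ?_, ?_, by simp, rfl⟩
      · simp [List.isChain_cons_cons, hadj]
      · refine List.nodup_cons.2 ⟨?_, List.nodup_singleton w⟩
        simp only [List.mem_singleton]
        rintro rfl; exact hu' hwmem
    have := hmax _ hP; omega
  · -- the path has at least two vertices
    have hll : l.length = k := hlen
    have h0 : 0 < l.length := by omega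
    have hk1l : k - 1 < l.length := by omega
    have hgl0 : l[0]'h0 = a := (List.head_eq_getElem hne).symm
    have hglk : l[k-1]'hk1l = b := by
      rw [hb, List.getLast_eq_getElem hne]
      exact getElem_congr' l (by omega) hk1l
    by_cases hab : G.Adj a b
    · exact hext l hchain (List.Perm.refl l) (fun hc => hab.symm)
    · have hanb : a ≠ b := by
        rw [← hgl0, ← hglk]
        intro h
        have := (hnodup.getElem_inj_iff).1 h
        omega
      set f : ℕ → V := fun i => l.getD i a with hf0
      have hf : ∀ i (h : i < l.length), f i = l[i]'h := fun i h => List.getD_eq_getElem l a h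
      set S := (Finset.range (k-1)).filter (fun i => G.Adj a (f (i+1))) with hS
      set T := (Finset.range (k-1)).filter (fun i => G.Adj b (f i)) with hT
      have hidx : ∀ w, w ∈ l → ∀ h : List.idxOf w l < l.length, l[List.idxOf w l]'h = w :=
        fun w hw h => List.getElem_idxOf h
      have hSA : G.degree a ≤ S.card := by
        refine Finset.card_le_card_of_injOn (fun w => List.idxOf w l - 1) ?_ ?_
        · intro w hw
          rw [Finset.mem_coe, SimpleGraph.mem_neighborFinset] at hw
          have hwl : w ∈ l := hmemA w hw
          have hj : List.idxOf w l < l.length := List.idxOf_lt_length_iff.2 hwl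
          have hlw := hidx w hwl hj
          have hj0 : List.idxOf w l ≠ 0 := by
            intro h0'
            simp only [h0'] at hlw
            exact hw.ne (hgl0.symm.trans hlw)
          show List.idxOf w l - 1 ∈ S
          rw [hS, Finset.mem_filter, Finset.mem_range]
          constructor
          · omega
          · have he : (List.idxOf w l - 1) + 1 = List.idxOf w l := by omega
            rw [he, hf _ hj, hlw]; exact hw
        · intro w1 hw1 w2 hw2 he
          simp only [Finset.coe_filter, Set.mem_setOf_eq, Finset.mem_coe,
            SimpleGraph.mem_neighborFinset] at hw1 hw2
          have hl1 : w1 ∈ l := hmemA w1 hw1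
          have hl2 : w2 ∈ l := hmemA w2 hw2
          have hj1 : List.idxOf w1 l < l.length := List.idxOf_lt_length_iff.2 hl1
          have hj2 : List.idxOf w2 l < l.length := List.idxOf_lt_length_iff.2 hl2
          have hj10 : List.idxOf w1 l ≠ 0 := by
            intro h0'
            have hlw := hidx w1 hl1 hj1
            simp only [h0'] at hlw
            exact hw1.ne (hgl0.symm.trans hlw)
          have hj20 : List.idxOf w2 l ≠ 0 := by
            intro h0'
            have hlw := hidx w2 hl2 hj2
            simp only [h0'] at hlw
            exact hw2.ne (hgl0.symm.trans hlw)
          have he' : List.idxOf w1 l - 1 = List.idxOf w2 l - 1 := he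
          have h12 : List.idxOf w1 l = List.idxOf w2 l := by omega
          rw [← hidx w1 hl1 hj1, ← hidx w2 hl2 hj2]
          simp only [h12]
      have hTB : G.degree b ≤ T.card := by
        refine Finset.card_le_card_of_injOn (fun w => List.idxOf w l) ?_ ?_
        · intro w hw
          rw [Finset.mem_coe, SimpleGraph.mem_neighborFinset] at hw
          have hwl : w ∈ l := hmemB w hw
          have hj : List.idxOf w l < l.length := List.idxOf_lt_length_iff.2 hwl
          have hlw := hidx w hwl hj
          have hjk : List.idxOf w l ≠ k - 1 := by
            intro h0'
            simp only [h0'] at hlw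
            exact hw.ne (hglk.symm.trans hlw)
          show List.idxOf w l ∈ T
          rw [hT, Finset.mem_filter, Finset.mem_range]
          refine ⟨by omega, ?_⟩
          rw [hf _ hj, hlw]; exact hw
        · intro w1 hw1 w2 hw2 he
          simp only [Finset.coe_filter, Set.mem_setOf_eq, Finset.mem_coe,
            SimpleGraph.mem_neighborFinset] at hw1 hw2
          have hl1 : w1 ∈ l := hmemB w1 hw1
          have hl2 : w2 ∈ l := hmemB w2 hw2
          have he' : List.idxOf w1 l = List.idxOf w2 l := he
          rw [← hidx w1 hl1 (List.idxOf_lt_length_iff.2 hl1),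
            ← hidx w2 hl2 (List.idxOf_lt_length_iff.2 hl2)]
          simp only [he']
      by_cases hcross : ∃ i, i < k - 1 ∧ G.Adj a (f (i+1)) ∧ G.Adj b (f i)
      · obtain ⟨i, hik, hia, hib⟩ := hcross
        have hi1k : i + 1 < l.length := by omega
        have hil : i < l.length := by omega
        have hia' : G.Adj a (l[i+1]'hi1k) := by rw [← hf _ hi1k]; exact hia
        have hib' : G.Adj b (l[i]'hil) := by rw [← hf _ hil]; exact hib
        set c := l.take (i+1) ++ (l.drop (i+1)).reverse with hc
        have hperm : c.Perm l := by
          calc c.Perm (l.take (i+1) ++ l.drop (i+1)) :=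
                List.Perm.append_left _ (List.reverse_perm _)
          _ = l := List.take_append_drop _ _
        have hcne : c ≠ [] := by
          intro h
          exact hne (List.Perm.eq_nil (h ▸ hperm.symm))
        have hclen : c.length = l.length := hperm.length_eq
        have hlt : (l.take (i+1)).length = i + 1 := by
          rw [List.length_take]; omega
        have hdlen : ((l.drop (i+1)).reverse).length = l.length - (i+1) := by
          simp
        have htne : l.take (i+1) ≠ [] := by
          apply List.ne_nil_of_length_pos; omega
        have hdne : (l.drop (i+1)).reverse ≠ [] := by
          apply List.ne_nil_of_length_pos; omega
        -- the last vertex of the "take" part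
        have e1 : (l.take (i+1)).getLast htne = l[i]'hil := by
          rw [List.getLast_eq_getElem htne, List.getElem_take]
          exact getElem_congr' l (by omega) _
        -- the head of the reversed "drop" part
        have e2 : ((l.drop (i+1)).reverse).head hdne = l[k-1]'hk1l := by
          rw [List.head_eq_getElem hdne, List.getElem_reverse, List.getElem_drop]
          exact getElem_congr' l (by simp only [List.length_drop]; omega) _
        have hchainc : c.IsChain G.Adj := by
          refine List.IsChain.append (hchain.take _)
            (List.isChain_reverse.2 (List.IsChain.imp (fun a b h => h.symm) (hchain.drop _))) ?_
          intro p hp q hq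
          rw [List.getLast?_eq_getLast htne, Option.mem_def, Option.some.injEq] at hp
          rw [List.head?_eq_head hdne, Option.mem_def, Option.some.injEq] at hq
          rw [← hp, ← hq, e1, e2, hglk]
          exact hib'.symm
        have hclen' : (l.take (i+1) ++ (l.drop (i+1)).reverse).length = l.length := hclen
        have e3 : ∀ hcc : c ≠ [], c.head hcc = a := by
          intro hcc
          show (l.take (i+1) ++ (l.drop (i+1)).reverse).head _ = a
          rw [List.head_eq_getElem,
            List.getElem_append_left (show 0 < (l.take (i+1)).length by omega),
            List.getElem_take]
          exact hgl0
        have e4 : ∀ hcc : c ≠ [], c.getLast hcc = l[i+1]'hi1k := by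
          intro hcc
          show (l.take (i+1) ++ (l.drop (i+1)).reverse).getLast _ = _
          rw [List.getLast_eq_getElem,
            List.getElem_append_right (show (l.take (i+1)).length ≤
              (l.take (i+1) ++ (l.drop (i+1)).reverse).length - 1 by omega),
            List.getElem_reverse, List.getElem_drop]
          exact getElem_congr' l (by
            simp only [List.length_drop, List.length_take, List.length_append,
              List.length_reverse]
            omega) _
        refine hext c hchainc hperm (fun hcc => ?_)
        rw [e4 hcc, e3 hcc]
        exact hia'.symm
      · push_neg at hcross
        have hdisj : Disjoint S T := by
          rw [Finset.disjoint_left]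
          intro i hiS hiT
          rw [hS, Finset.mem_filter, Finset.mem_range] at hiS
          rw [hT, Finset.mem_filter] at hiT
          exact (hcross i hiS.1 hiS.2) hiT.2
        have hsub : S ∪ T ⊆ Finset.range (k-1) :=
          Finset.union_subset (Finset.filter_subset _ _) (Finset.filter_subset _ _)
        have hcard : S.card + T.card ≤ k - 1 := by
          rw [← Finset.card_union_of_disjoint hdisj]
          calc (S ∪ T).card ≤ (Finset.range (k-1)).card := Finset.card_le_card hsub
          _ = k - 1 := Finset.card_range _
        have := hdeg a b hanb hab
        omega

/-- Let `t ≥ 5` and let `G` be a connected graph on `n` vertices with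
`σ₂(G) ≥ ((t-3)/(t-2))·n`. If `G` has no Hamiltonian path, then `n ≥ 2t - 4`. -/
theorem stmt_11 {V : Type*} [Fintype V] [DecidableEq V] (G : SimpleGraph V)
    [DecidableRel G.Adj] (t : ℕ) (ht : 5 ≤ t) (hconn : G.Connected)
    (hσ₂ : ∀ x y : V, x ≠ y → ¬ G.Adj x y →
      ((t : ℝ) - 3) / ((t : ℝ) - 2) * (Fintype.card V : ℝ)
        ≤ (G.degree x : ℝ) + (G.degree y : ℝ))
    (hnoham : ¬ ∃ (a b : V) (p : G.Walk a b), p.IsHamiltonian) :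
    2 * t - 4 ≤ Fintype.card V := by
  by_contra hlt
  push_neg at hlt
  apply hnoham
  apply key_ham G hconn
  intro x y hxy hnadj
  have h1 := hσ₂ x y hxy hnadj
  have ht' : (5 : ℝ) ≤ (t : ℝ) := by exact_mod_cast ht
  have h2 : (0 : ℝ) < (t : ℝ) - 2 := by linarith
  have hn5 : (Fintype.card V : ℝ) + 5 ≤ 2 * (t : ℝ) := by
    have : Fintype.card V + 5 ≤ 2 * t := by omega
    exact_mod_cast this
  rw [div_mul_eq_mul_div, div_le_iff₀ h2] at h1
  have key : (Fintype.card V : ℝ) < (G.degree x : ℝ) + (G.degree y : ℝ) + 2 := by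
    nlinarith
  have : (Fintype.card V : ℝ) < ((G.degree x + G.degree y + 2 : ℕ) : ℝ) := by
    push_cast; linarith
  have := Nat.cast_lt.mp this
  omega
end
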